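/- arXiv:1911.07220 — 2 statements merged into one kernel-verified Lean document; each statement's English description precedes it below -/
import Mathlib

section
/- Fix k > −1/2. For any sequence of complex numbers ρ_n = β_n + iγ_n with β_n ∈ [0,1] and γ_n > 0 such that Σ_n γ_n^{−k−3/2} < ∞, and any N ≥ 1, the sum Σ_n γ_n^{β_n − 1/2} · N^{k+1+β_n} · ∫_1^∞ exp(−γ_n arctan(1/u)) u^{−k−2−β_n} du converges and is bounded by C_k · N^{k+2} · Σ_n γ_n^{−k−3/2}. -/
/-!
For `u ≥ 1` we have `arctan (1/u) ≥ 1/(2u)`, and `(1 + y/s)^s ≤ e^y`; together they bound the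
integrand by `(2s)^s (u + γ)^(-s)` with `s = k + 2 + β`, so the integral is at most
`(2s)^s (1 + γ)^(1-s) / (s - 1) ≤ C_k γ^(-(k+1+β))`. Hence each term is at most
`C_k N^(k+2) γ^(-k-3/2)` uniformly in `β ∈ [0, 1]`, and the series is dominated by a multiple of
`∑ γ_n^(-k-3/2)`.
-/

open MeasureTheory Real Set

lemma div_two_le_arctan {x : ℝ} (h0 : 0 ≤ x) (h1 : x ≤ 1) : x / 2 ≤ arctan x := by
  have hsqrt : √(1 + x ^ 2) ≤ 2 := Real.sqrt_le_iff.2 ⟨zero_le_two, by nlinarith⟩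
  calc x / 2 ≤ x / √(1 + x ^ 2) := div_le_div_of_nonneg_left h0 (by positivity) hsqrt
    _ = sin (arctan x) := (sin_arctan x).symm
    _ ≤ arctan x := sin_le (arctan_nonneg.2 h0)

lemma one_add_div_rpow_le_exp {y s : ℝ} (hy : 0 ≤ y) (hs : 0 < s) : (1 + y / s) ^ s ≤ exp y := by
  calc (1 + y / s) ^ s ≤ exp (y / s) ^ s := by
        gcongr
        linarith [add_one_le_exp (y / s)]
    _ = exp y := by rw [← exp_mul, div_mul_cancel₀ y hs.ne']

lemma exp_neg_mul_arctan_inv_mul_rpow_neg_le {γ s u : ℝ} (hγ : 0 ≤ γ) (hs : 1 / 2 ≤ s)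
    (hu : 1 ≤ u) : exp (-γ * arctan (1 / u)) * u ^ (-s) ≤ (2 * s) ^ s * (u + γ) ^ (-s) := by
  have hu0 : 0 < u := one_pos.trans_le hu
  have key : ((u + γ) / (2 * s)) ^ s ≤ u ^ s * exp (γ * arctan (1 / u)) := by
    calc ((u + γ) / (2 * s)) ^ s ≤ (u * (1 + γ / (2 * u) / s)) ^ s := by
          have : u * (1 + γ / (2 * u) / s) = u + γ / (2 * s) := by field_simp
          rw [this, add_div]
          gcongr
          exact div_le_self hu0.le (by linarith)
      _ = u ^ s * (1 + γ / (2 * u) / s) ^ s := mul_rpow hu0.le (by positivity)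
      _ ≤ u ^ s * exp (γ / (2 * u)) := by
          gcongr
          exact one_add_div_rpow_le_exp (by positivity) (by linarith)
      _ ≤ u ^ s * exp (γ * arctan (1 / u)) := by
          have := div_two_le_arctan (x := 1 / u) (by positivity) (by rwa [div_le_one hu0])
          gcongr
          calc γ / (2 * u) = γ * (1 / u / 2) := by ring
            _ ≤ γ * arctan (1 / u) := by gcongr
  calc exp (-γ * arctan (1 / u)) * u ^ (-s) = (u ^ s * exp (γ * arctan (1 / u)))⁻¹ := by
        rw [rpow_neg hu0.le, neg_mul, exp_neg, mul_inv, mul_comm]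
    _ ≤ (((u + γ) / (2 * s)) ^ s)⁻¹ := inv_anti₀ (by positivity) key
    _ = (2 * s) ^ s * (u + γ) ^ (-s) := by
        rw [div_rpow (by positivity) (by positivity), inv_div, rpow_neg (by positivity),
          div_eq_mul_inv]

lemma integral_Ioi_add_rpow {a c m : ℝ} (ha : a < -1) (hcm : 0 < c + m) :
    ∫ x in Ioi c, (x + m) ^ a = -(c + m) ^ (a + 1) / (a + 1) := by
  have := (measurePreserving_add_right volume m).setIntegral_preimage_emb
    (measurableEmbedding_addRight m) (fun x => x ^ a) (Ioi (c + m))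
  rw [preimage_add_const_Ioi, add_sub_cancel_right] at this
  rw [this, integral_Ioi_rpow_of_lt ha hcm]

lemma setIntegral_exp_neg_mul_arctan_inv_mul_rpow_nonneg (γ a : ℝ) :
    0 ≤ ∫ u in Ioi (1 : ℝ), exp (-γ * arctan (1 / u)) * u ^ a :=
  setIntegral_nonneg measurableSet_Ioi fun _ hu =>
    mul_nonneg (exp_nonneg _) (rpow_nonneg (zero_le_one.trans hu.le) _)

lemma setIntegral_exp_neg_mul_arctan_inv_mul_rpow_neg_le {γ s : ℝ} (hγ : 0 ≤ γ) (hs : 1 < s) :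
    ∫ u in Ioi (1 : ℝ), exp (-γ * arctan (1 / u)) * u ^ (-s) ≤
      (2 * s) ^ s / (s - 1) * (1 + γ) ^ (1 - s) := by
  calc _ ≤ ∫ u in Ioi (1 : ℝ), (2 * s) ^ s * (u + γ) ^ (-s) := by
        refine integral_mono_of_nonneg ?_
          ((integrableOn_add_rpow_Ioi_of_lt (by linarith) (by linarith)).const_mul _) ?_
        · filter_upwards [ae_restrict_mem measurableSet_Ioi] with u hu
          exact mul_nonneg (exp_nonneg _) (rpow_nonneg (zero_le_one.trans hu.le) _)
        · filter_upwards [ae_restrict_mem measurableSet_Ioi] with u hu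
          exact exp_neg_mul_arctan_inv_mul_rpow_neg_le hγ (by linarith) hu.le
    _ = (2 * s) ^ s / (s - 1) * (1 + γ) ^ (1 - s) := by
        rw [integral_const_mul, integral_Ioi_add_rpow (by linarith) (by linarith),
          show -s + 1 = -(s - 1) by ring, div_neg, neg_div, neg_neg, show -(s - 1) = 1 - s by ring]
        ring

lemma rpow_mul_rpow_mul_setIntegral_exp_neg_mul_arctan_inv_le {k β γ N : ℝ} (hk : -(1 / 2) < k)
    (hβ : β ∈ Icc (0 : ℝ) 1) (hγ : 0 < γ) (hN : 1 ≤ N) :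
    γ ^ (β - 1 / 2) * N ^ (k + 1 + β) *
        ∫ u in Ioi (1 : ℝ), exp (-γ * arctan (1 / u)) * u ^ (-k - 2 - β) ≤
      2 * (2 * k + 6) ^ (k + 3) * N ^ (k + 2) * γ ^ (-k - 3 / 2) := by
  obtain ⟨hβ0, hβ1⟩ := hβ
  set s := k + 2 + β with hs
  have hI := setIntegral_exp_neg_mul_arctan_inv_mul_rpow_neg_le hγ.le (s := s) (by linarith)
  rw [show -s = -k - 2 - β by ring] at hI
  have hconst : (2 * s) ^ s / (s - 1) ≤ 2 * (2 * k + 6) ^ (k + 3) := by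
    have hpow : (2 * s) ^ s ≤ (2 * k + 6) ^ (k + 3) :=
      calc (2 * s) ^ s ≤ (2 * k + 6) ^ s := by gcongr <;> linarith
        _ ≤ (2 * k + 6) ^ (k + 3) := rpow_le_rpow_of_exponent_le (by linarith) (by linarith)
    rw [div_le_iff₀ (by linarith)]
    nlinarith [rpow_nonneg (by linarith : (0 : ℝ) ≤ 2 * k + 6) (k + 3)]
  have hγpow : γ ^ (β - 1 / 2) * (1 + γ) ^ (1 - s) ≤ γ ^ (-k - 3 / 2) :=
    calc γ ^ (β - 1 / 2) * (1 + γ) ^ (1 - s) ≤ γ ^ (β - 1 / 2) * γ ^ (1 - s) := by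
          refine mul_le_mul_of_nonneg_left ?_ (rpow_nonneg hγ.le _)
          exact rpow_le_rpow_of_nonpos hγ (by linarith) (by linarith)
      _ = γ ^ (-k - 3 / 2) := by rw [← rpow_add hγ, hs]; ring_nf
  have hNpow : N ^ (k + 1 + β) ≤ N ^ (k + 2) := rpow_le_rpow_of_exponent_le hN (by linarith)
  have hI0 := setIntegral_exp_neg_mul_arctan_inv_mul_rpow_nonneg γ (-k - 2 - β)
  calc _ ≤ γ ^ (β - 1 / 2) * N ^ (k + 2) * ((2 * s) ^ s / (s - 1) * (1 + γ) ^ (1 - s)) := by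
        gcongr
    _ = (2 * s) ^ s / (s - 1) * N ^ (k + 2) * (γ ^ (β - 1 / 2) * (1 + γ) ^ (1 - s)) := by ring
    _ ≤ 2 * (2 * k + 6) ^ (k + 3) * N ^ (k + 2) * γ ^ (-k - 3 / 2) := by
        have hconst0 : 0 ≤ (2 * s) ^ s / (s - 1) :=
          div_nonneg (rpow_nonneg (by linarith) _) (by linarith)
        have hN0 : 0 ≤ N ^ (k + 2) := rpow_nonneg (by linarith) _
        gcongr
        exact mul_nonneg (hconst0.trans hconst) hN0

/-- For `k > −1/2` there is `C_k > 0` such that: for any sequence `ρ_n = β_n + iγ_n`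
with `β_n ∈ [0,1]`, `γ_n > 0` and `∑ γ_n^{−k−3/2} < ∞`, and any `N ≥ 1`, the sum
`∑_n γ_n^{β_n−1/2} N^{k+1+β_n} ∫_1^∞ exp(−γ_n arctan(1/u)) u^{−k−2−β_n} du`
converges and is at most `C_k N^{k+2} ∑_n γ_n^{−k−3/2}`. -/
theorem stmt13 (k : ℝ) (hk : -(1 / 2) < k) :
    ∃ C : ℝ, 0 < C ∧ ∀ (β γ : ℕ → ℝ),
      (∀ n, β n ∈ Set.Icc (0 : ℝ) 1) → (∀ n, 0 < γ n) →
      Summable (fun n => γ n ^ (-k - 3 / 2)) →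
      ∀ N : ℝ, 1 ≤ N →
      Summable (fun n => γ n ^ (β n - 1 / 2) * N ^ (k + 1 + β n) *
        ∫ u in Set.Ioi (1 : ℝ),
          Real.exp (-γ n * Real.arctan (1 / u)) * u ^ (-k - 2 - β n)) ∧
      (∑' n, γ n ^ (β n - 1 / 2) * N ^ (k + 1 + β n) *
        ∫ u in Set.Ioi (1 : ℝ),
          Real.exp (-γ n * Real.arctan (1 / u)) * u ^ (-k - 2 - β n)) ≤
        C * N ^ (k + 2) * ∑' n, γ n ^ (-k - 3 / 2) := by
  refine ⟨2 * (2 * k + 6) ^ (k + 3), mul_pos two_pos (rpow_pos_of_pos (by linarith) _),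
    fun β γ hβ hγ hsum N hN => ?_⟩
  have hle := fun n => rpow_mul_rpow_mul_setIntegral_exp_neg_mul_arctan_inv_le hk (hβ n) (hγ n) hN
  have hnonneg : ∀ n, 0 ≤ γ n ^ (β n - 1 / 2) * N ^ (k + 1 + β n) *
      ∫ u in Ioi (1 : ℝ), exp (-γ n * arctan (1 / u)) * u ^ (-k - 2 - β n) := fun n =>
    mul_nonneg (mul_nonneg (rpow_nonneg (hγ n).le _) (rpow_nonneg (by linarith) _))
      (setIntegral_exp_neg_mul_arctan_inv_mul_rpow_nonneg _ _)
  have hmajorant := hsum.mul_left (2 * (2 * k + 6) ^ (k + 3) * N ^ (k + 2))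
  have hsummable := Summable.of_nonneg_of_le hnonneg hle hmajorant
  refine ⟨hsummable, ?_⟩
  rw [← tsum_mul_left]
  exact hsummable.tsum_le_tsum hle hmajorant
end

section
/- For any k > 1, real G ≥ 1, integer N ≥ 2, suppose E : ℝ → ℂ satisfies |E(y)| ≤ G + 1 + |log(max(|y|,1/N))| + √(max(|y|,1/N)) · (1 + log²(max(N|y|,1))) for all y. Then ∫_ℝ |E(y)|² / max(|y|, 1/N)^{k+1} dy ≤ C_k · N^k · (G + log N)². -/
/-!
Put `x = max (N |y|) 1`, so that `max |y| (1/N) = x / N`. The hypothesis bounds `‖E y‖` by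
`2 (G + 1 + log N) √x (1 + log x)²`, and `log x ≤ x^ε / ε` turns this into
`≪_ε (G + log N) x^(1/2 + 2ε)`. For `ε = (k - 1)/8` the integrand is then
`≪_k (G + log N)² N^(k+1) x^(-(k+1)/2)`, and the substitution `u = N y` shows that
`∫ max (|N y|) 1 ^ (-(k+1)/2) dy` is `N⁻¹` times a constant, finite because `(k+1)/2 > 1`.
-/

open MeasureTheory Real

lemma integrable_max_abs_one_rpow_neg {p : ℝ} (hp : 1 < p) :
    Integrable (fun u : ℝ => max |u| 1 ^ (-p)) := by
  have hdom := (integrable_one_add_norm (E := ℝ) (μ := volume) (r := p)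
    (by simpa using hp)).const_mul (2 ^ p)
  refine hdom.mono' ?_ (ae_of_all _ fun u => ?_)
  · exact ((continuous_abs.max continuous_const).rpow_const
      fun u => Or.inl (lt_max_of_lt_right one_pos).ne').aestronglyMeasurable
  · have hM : 0 < max |u| 1 := lt_max_of_lt_right one_pos
    rw [Real.norm_of_nonneg (rpow_nonneg hM.le _), Real.norm_eq_abs]
    calc max |u| 1 ^ (-p) ≤ ((1 + |u|) / 2) ^ (-p) :=
          rpow_le_rpow_of_nonpos (by positivity)
            (by linarith [le_max_left |u| 1, le_max_right |u| 1]) (by linarith)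
      _ = 2 ^ p * (1 + |u|) ^ (-p) := by
          rw [div_rpow (by positivity) zero_le_two, rpow_neg zero_le_two, div_inv_eq_mul, mul_comm]

lemma integral_max_abs_one_rpow_neg_pos {p : ℝ} (hp : 1 < p) :
    0 < ∫ u : ℝ, max |u| 1 ^ (-p) := by
  have hpos : ∀ u : ℝ, 0 < max |u| 1 ^ (-p) :=
    fun u => rpow_pos_of_pos (lt_max_of_lt_right one_pos) _
  have hsupp : Function.support (fun u : ℝ => max |u| 1 ^ (-p)) = Set.univ :=
    Set.eq_univ_of_forall fun u => (hpos u).ne'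
  rw [integral_pos_iff_support_of_nonneg (fun u => (hpos u).le)
    (integrable_max_abs_one_rpow_neg hp), hsupp, Real.volume_univ]
  exact ENNReal.zero_lt_top

lemma integral_max_mul_abs_one_rpow_neg {N : ℝ} (hN : 0 < N) (p : ℝ) :
    ∫ y : ℝ, max (N * |y|) 1 ^ (-p) = N⁻¹ * ∫ u : ℝ, max |u| 1 ^ (-p) := by
  have h : ∀ y : ℝ, N * |y| = |N * y| := fun y => by rw [abs_mul, abs_of_pos hN]
  simp_rw [h, Measure.integral_comp_mul_left (fun u : ℝ => max |u| 1 ^ (-p)) N, abs_inv,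
    abs_of_pos hN, smul_eq_mul]

lemma integrable_max_mul_abs_one_rpow_neg {N p : ℝ} (hN : 0 < N) (hp : 1 < p) :
    Integrable (fun y : ℝ => max (N * |y|) 1 ^ (-p)) := by
  have h : ∀ y : ℝ, N * |y| = |N * y| := fun y => by rw [abs_mul, abs_of_pos hN]
  simp_rw [h]
  exact (integrable_max_abs_one_rpow_neg hp).comp_mul_left' hN.ne'

lemma max_abs_inv_eq_div {N : ℝ} (hN : 0 < N) (y : ℝ) :
    max |y| (1 / N) = max (N * |y|) 1 / N := by
  rw [← max_div_div_right hN.le, mul_div_cancel_left₀ _ hN.ne']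

lemma one_add_log_le_rpow {x ε : ℝ} (hx : 1 ≤ x) (hε : 0 < ε) :
    1 + log x ≤ (1 + ε⁻¹) * x ^ ε := by
  have hlog : log x ≤ ε⁻¹ * x ^ ε := by
    rw [inv_mul_eq_div]; exact log_le_rpow_div (by linarith) hε
  have hone : 1 ≤ x ^ ε := one_le_rpow hx hε.le
  nlinarith [inv_pos.2 hε]

lemma sqrt_mul_one_add_log_sq_le {x ε : ℝ} (hx : 1 ≤ x) (hε : 0 < ε) :
    √x * (1 + log x) ^ 2 ≤ (1 + ε⁻¹) ^ 2 * x ^ (1 / 2 + 2 * ε) := by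
  have hx0 : 0 ≤ x := by linarith
  have hsq : (1 + log x) ^ 2 ≤ ((1 + ε⁻¹) * x ^ ε) ^ 2 :=
    pow_le_pow_left₀ (by linarith [log_nonneg hx]) (one_add_log_le_rpow hx hε) 2
  calc √x * (1 + log x) ^ 2 ≤ √x * ((1 + ε⁻¹) * x ^ ε) ^ 2 := by gcongr
    _ = (1 + ε⁻¹) ^ 2 * x ^ (1 / 2 + 2 * ε) := by
        rw [sqrt_eq_rpow, rpow_add' hx0 (by positivity), mul_comm 2 ε, rpow_mul hx0, rpow_two]
        ring

lemma add_abs_log_div_add_sqrt_div_mul_le {a N x : ℝ} (ha : 1 ≤ a) (hN : 1 ≤ N)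
    (hx : 1 ≤ x) :
    a + |log (x / N)| + √(x / N) * (1 + log x ^ 2) ≤
      2 * (a + log N) * (√x * (1 + log x) ^ 2) := by
  have hlogN := log_nonneg hN
  have hlogx := log_nonneg hx
  have hlog : |log (x / N)| ≤ log x + log N := by
    rw [log_div (by positivity) (by positivity)]
    exact abs_sub_le_iff.2 ⟨by linarith, by linarith⟩
  have hsqrt : √(x / N) ≤ √x := sqrt_le_sqrt (div_le_self (by linarith) hN)
  have hs : 1 ≤ √x := one_le_sqrt.2 hx
  have hlog2 : 1 + log x ^ 2 ≤ (1 + log x) ^ 2 := by nlinarith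
  have hprod : √(x / N) * (1 + log x ^ 2) ≤ √x * (1 + log x) ^ 2 :=
    mul_le_mul hsqrt hlog2 (by positivity) (by positivity)
  have hb : 1 ≤ a + log N := by linarith
  nlinarith [mul_le_mul hb (le_refl (√x * (1 + log x) ^ 2)) (by positivity) (by positivity),
    mul_le_mul hs (le_refl ((1 + log x) ^ 2)) (by positivity) (by positivity)]

lemma sq_div_max_abs_rpow_le {G N k ε X y : ℝ} (hG : 0 ≤ G) (hN : 1 ≤ N) (hε : 0 < ε)
    (hX : 0 ≤ X) (hXle : X ≤ G + 1 + |log (max |y| (1 / N))| +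
      √(max |y| (1 / N)) * (1 + log (max (N * |y|) 1) ^ 2)) :
    X ^ 2 / max |y| (1 / N) ^ (k + 1) ≤
      (2 * (1 + ε⁻¹) ^ 2 * (G + 1 + log N)) ^ 2 * N ^ (k + 1) *
        max (N * |y|) 1 ^ (1 + 4 * ε - (k + 1)) := by
  have hN0 : 0 < N := by linarith
  rw [max_abs_inv_eq_div hN0] at hXle ⊢
  set x := max (N * |y|) 1
  have hx : 1 ≤ x := le_max_right _ _
  have hx0 : 0 < x := by linarith
  set c := 2 * (1 + ε⁻¹) ^ 2 * (G + 1 + log N)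
  have hXc : X ≤ c * x ^ (1 / 2 + 2 * ε) := by
    have hb : 0 ≤ 2 * (G + 1 + log N) := by linarith [log_nonneg hN]
    calc X ≤ _ := hXle
      _ ≤ 2 * (G + 1 + log N) * (√x * (1 + log x) ^ 2) :=
          add_abs_log_div_add_sqrt_div_mul_le (by linarith) hN hx
      _ ≤ 2 * (G + 1 + log N) * ((1 + ε⁻¹) ^ 2 * x ^ (1 / 2 + 2 * ε)) :=
          mul_le_mul_of_nonneg_left (sqrt_mul_one_add_log_sq_le hx hε) hb
      _ = c * x ^ (1 / 2 + 2 * ε) := by ring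
  have hX2 : X ^ 2 ≤ c ^ 2 * x ^ (1 + 4 * ε) := by
    calc X ^ 2 ≤ (c * x ^ (1 / 2 + 2 * ε)) ^ 2 := pow_le_pow_left₀ hX hXc 2
      _ = c ^ 2 * x ^ (1 + 4 * ε) := by
          rw [mul_pow, ← rpow_mul_natCast hx0.le]; ring_nf
  calc X ^ 2 / (x / N) ^ (k + 1) = X ^ 2 * N ^ (k + 1) / x ^ (k + 1) := by
        rw [div_rpow hx0.le hN0.le, div_div_eq_mul_div]
    _ ≤ c ^ 2 * x ^ (1 + 4 * ε) * N ^ (k + 1) / x ^ (k + 1) := by gcongr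
    _ = c ^ 2 * N ^ (k + 1) * x ^ (1 + 4 * ε - (k + 1)) := by rw [rpow_sub hx0]; ring

/-- Abstract form of the `L`-bound lemma: for `k > 1` there is `C_k > 0` such that for all
`G ≥ 1`, integers `N ≥ 2` and `E : ℝ → ℂ` satisfying the pointwise error-term bound,
`∫_ℝ |E(y)|²/max(|y|,1/N)^{k+1} dy ≤ C_k N^k (G + log N)²`. -/
theorem stmt18 (k : ℝ) (hk : 1 < k) :
    ∃ C : ℝ, 0 < C ∧ ∀ G : ℝ, 1 ≤ G → ∀ N : ℕ, 2 ≤ N → ∀ E : ℝ → ℂ,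
      (∀ y : ℝ, ‖E y‖ ≤ G + 1 + |Real.log (max |y| (1 / N))| +
        Real.sqrt (max |y| (1 / N)) * (1 + Real.log (max ((N : ℝ) * |y|) 1) ^ 2)) →
      (∫ y : ℝ, ‖E y‖ ^ 2 / max |y| (1 / N) ^ (k + 1)) ≤
        C * (N : ℝ) ^ k * (G + Real.log N) ^ 2 := by
  set ε := (k - 1) / 8
  have hε : 0 < ε := by positivity
  have hp : 1 < (k + 1) / 2 := by linarith
  have hexp : 1 + 4 * ε - (k + 1) = -((k + 1) / 2) := by ring
  set c := 2 * (1 + ε⁻¹) ^ 2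
  set I := ∫ u : ℝ, max |u| 1 ^ (-((k + 1) / 2))
  have hI : 0 < I := integral_max_abs_one_rpow_neg_pos hp
  refine ⟨4 * c ^ 2 * I, mul_pos (by positivity) hI, fun G hG N hN E hE => ?_⟩
  have hN1 : (1 : ℝ) ≤ N := by exact_mod_cast one_le_two.trans hN
  have hN0 : (0 : ℝ) < N := by linarith
  have hrescale : ∫ y : ℝ, max (N * |y|) 1 ^ (-((k + 1) / 2)) = (N : ℝ)⁻¹ * I :=
    integral_max_mul_abs_one_rpow_neg hN0 _
  calc ∫ y : ℝ, ‖E y‖ ^ 2 / max |y| (1 / N) ^ (k + 1)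
      ≤ ∫ y : ℝ, (c * (G + 1 + log N)) ^ 2 * N ^ (k + 1) *
          max (N * |y|) 1 ^ (-((k + 1) / 2)) :=
        integral_mono_of_nonneg (ae_of_all _ fun y => by positivity)
          ((integrable_max_mul_abs_one_rpow_neg hN0 hp).const_mul _)
          (ae_of_all _ fun y => hexp ▸ sq_div_max_abs_rpow_le (k := k) (by linarith) hN1 hε
            (norm_nonneg _) (hE y))
    _ = (G + 1 + log N) ^ 2 * c ^ 2 * I * N ^ k := by
        rw [integral_const_mul, hrescale, rpow_add hN0, rpow_one]
        field_simp
    _ ≤ (2 * (G + log N)) ^ 2 * c ^ 2 * I * N ^ k := by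
        gcongr; linarith [log_nonneg hN1]
    _ = 4 * c ^ 2 * I * N ^ k * (G + log N) ^ 2 := by ring
end
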